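/- arXiv:1511.05723 — 5 statements merged into one kernel-verified Lean document; each statement's English description precedes it below -/
import Mathlib

section
/- For z ∈ ℂ \ [-1,1] and m ≥ 0, P_m(z) := (1/2π)∫₀^{2π} cos(mφ)/(z-cos φ) dφ equals (z - √(z²-1))^m / √(z²-1), where √(z²-1) = √(z+1)√(z-1) with principal branches; in particular P_m(z) → 0 as m → ∞ for each fixed z ∈ ℂ \ [-1,1]. -/
/-!
Put `s = √(z+1) √(z-1)` and `w = z - s`. Then `w⁻¹ = z + s`, so `z = (w + w⁻¹)/2`, and for
`ζ = e^{iθ}` one has `z - cos θ = -(ζ - w)(ζ - w⁻¹)/(2ζ)`. The branch makes `‖w‖ < 1`: with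
`u = √(z+1)`, `v = √(z-1)` we get `w = (u - v)/(u + v)`, and the arguments of `u` and `v` differ
by less than `π/2`, so `Re (u v̄) > 0`. By the symmetry `θ ↦ 2π - θ` the sine part drops out, so the
integral of `cos (mθ)/(z - cos θ)` is that of `ζ^m/(z - cos θ)`, a contour integral over the unit
circle whose only pole inside is `w`; Cauchy's formula gives `2π w^m / s`, and `w^m → 0`.
-/

open MeasureTheory Filter Complex Metric ComplexConjugate

lemma ofReal_cos_eq_circleMap (θ : ℝ) :
    (Real.cos θ : ℂ) = (circleMap 0 1 θ + (circleMap 0 1 θ)⁻¹) / 2 := by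
  simp only [circleMap, zero_add, ofReal_one, one_mul, ← exp_neg, Complex.ofReal_cos, Complex.cos]
  ring_nf

lemma joukowski_sub_joukowski {w ζ : ℂ} (hw : w ≠ 0) (hζ : ζ ≠ 0) :
    (w + w⁻¹) / 2 - (ζ + ζ⁻¹) / 2 = -((ζ - w) * (ζ - w⁻¹)) / (2 * ζ) := by
  field_simp
  ring

lemma one_lt_norm_inv {w : ℂ} (hw₀ : w ≠ 0) (hw : ‖w‖ < 1) : 1 < ‖w⁻¹‖ := by
  rw [norm_inv]; exact one_lt_inv_iff₀.2 ⟨norm_pos_iff.2 hw₀, hw⟩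

lemma circleMap_sub_ne_zero {w : ℂ} (hw : ‖w‖ ≠ 1) (θ : ℝ) : circleMap 0 1 θ - w ≠ 0 := by
  rw [sub_ne_zero]
  rintro rfl
  simp at hw

lemma joukowski_sub_cos_ne_zero {w : ℂ} (hw₀ : w ≠ 0) (hw : ‖w‖ < 1) (θ : ℝ) :
    (w + w⁻¹) / 2 - (Real.cos θ : ℂ) ≠ 0 := by
  have hζ : circleMap 0 1 θ ≠ 0 := circleMap_ne_center one_ne_zero
  rw [ofReal_cos_eq_circleMap, joukowski_sub_joukowski hw₀ hζ]
  exact div_ne_zero (neg_ne_zero.2 (mul_ne_zero (circleMap_sub_ne_zero hw.ne θ)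
    (circleMap_sub_ne_zero (one_lt_norm_inv hw₀ hw).ne' θ))) (mul_ne_zero two_ne_zero hζ)

theorem integral_circleMap_pow_div_joukowski_sub_cos {w : ℂ} (hw₀ : w ≠ 0) (hw : ‖w‖ < 1)
    (m : ℕ) :
    ∫ θ in (0:ℝ)..2 * Real.pi, circleMap 0 1 θ ^ m / ((w + w⁻¹) / 2 - (Real.cos θ : ℂ)) =
      4 * Real.pi * w ^ m / (w⁻¹ - w) := by
  have hdiff : DifferentiableOn ℂ (fun ζ => ζ ^ m / (ζ - w⁻¹)) (closedBall 0 1) := by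
    refine (differentiableOn_pow m).div (differentiableOn_id.sub_const _) fun ζ hζ => ?_
    rw [sub_ne_zero]
    rintro rfl
    have := one_lt_norm_inv hw₀ hw
    rw [mem_closedBall_zero_iff] at hζ
    linarith
  have hcauchy := hdiff.circleIntegral_sub_inv_smul (c := 0) (R := 1) (w := w) (by simpa using hw)
  rw [circleIntegral] at hcauchy
  have hpt : ∀ θ : ℝ, circleMap 0 1 θ ^ m / ((w + w⁻¹) / 2 - (Real.cos θ : ℂ)) =
      2 * I * (deriv (circleMap 0 1) θ • ((circleMap 0 1 θ - w)⁻¹ •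
        (circleMap 0 1 θ ^ m / (circleMap 0 1 θ - w⁻¹)))) := by
    intro θ
    have hζ : circleMap 0 1 θ ≠ 0 := circleMap_ne_center one_ne_zero
    have h1 := circleMap_sub_ne_zero hw.ne θ
    have h2 := circleMap_sub_ne_zero (one_lt_norm_inv hw₀ hw).ne' θ
    rw [ofReal_cos_eq_circleMap, joukowski_sub_joukowski hw₀ hζ, deriv_circleMap,
      smul_eq_mul, smul_eq_mul]
    field_simp
    rw [I_sq]
    ring
  rw [intervalIntegral.integral_congr fun θ _ => hpt θ, intervalIntegral.integral_const_mul,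
    hcauchy, smul_eq_mul, ← neg_sub w, div_neg]
  linear_combination (4 * Real.pi * w ^ m / (w - w⁻¹)) * I_sq

theorem integral_sin_mul_div_sub_cos (z : ℂ) (m : ℕ) :
    ∫ θ in (0:ℝ)..2 * Real.pi, (Real.sin (m * θ) : ℂ) / (z - (Real.cos θ : ℂ)) = 0 := by
  set f : ℝ → ℂ := fun θ => (Real.sin (m * θ) : ℂ) / (z - (Real.cos θ : ℂ))
  have hodd : ∀ θ, f (2 * Real.pi - θ) = -f θ := fun θ => by
    simp only [f, mul_sub, Real.sin_nat_mul_two_pi_sub, Real.cos_two_pi_sub, ofReal_neg, neg_div]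
  have h := intervalIntegral.integral_comp_sub_left f (a := 0) (b := 2 * Real.pi) (2 * Real.pi)
  simp only [hodd, intervalIntegral.integral_neg, sub_self, sub_zero] at h
  linear_combination -h / 2

lemma ofReal_cos_nat_mul (m : ℕ) (θ : ℝ) :
    (Real.cos (m * θ) : ℂ) = circleMap 0 1 θ ^ m - I * Real.sin (m * θ) := by
  rw [circleMap_zero, ofReal_one, one_mul, ← exp_nat_mul, ofReal_cos, ofReal_sin]
  push_cast
  rw [← mul_assoc, exp_mul_I]
  ring

theorem integral_cos_mul_div_joukowski_sub_cos {w : ℂ} (hw₀ : w ≠ 0) (hw : ‖w‖ < 1) (m : ℕ) :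
    ∫ θ in (0:ℝ)..2 * Real.pi, (Real.cos (m * θ) : ℂ) / ((w + w⁻¹) / 2 - (Real.cos θ : ℂ)) =
      4 * Real.pi * w ^ m / (w⁻¹ - w) := by
  have hD := joukowski_sub_cos_ne_zero hw₀ hw
  have hcont₁ : Continuous fun θ : ℝ =>
      circleMap 0 1 θ ^ m / ((w + w⁻¹) / 2 - (Real.cos θ : ℂ)) := by
    fun_prop (disch := exact hD)
  have hcont₂ : Continuous fun θ : ℝ =>
      I * ((Real.sin (m * θ) : ℂ) / ((w + w⁻¹) / 2 - (Real.cos θ : ℂ))) := by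
    fun_prop (disch := exact hD)
  simp_rw [ofReal_cos_nat_mul, sub_div, mul_div_assoc]
  rw [intervalIntegral.integral_sub (hcont₁.intervalIntegrable _ _)
      (hcont₂.intervalIntegrable _ _), intervalIntegral.integral_const_mul,
    integral_sin_mul_div_sub_cos,
    integral_circleMap_pow_div_joukowski_sub_cos hw₀ hw, mul_zero, sub_zero, mul_div_assoc]

lemma abs_arg_add_one_sub_arg_sub_one_lt_pi {z : ℂ}
    (hz : z ∉ {w : ℂ | w.im = 0 ∧ w.re ∈ Set.Icc (-1:ℝ) 1}) :
    |arg (z + 1) - arg (z - 1)| < Real.pi := by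
  simp only [Set.mem_ofPred_eq, Set.mem_Icc, not_and, not_le] at hz
  rw [abs_sub_lt_iff]
  rcases lt_trichotomy z.im 0 with him | him | him
  · have h₁ := neg_pi_lt_arg (z + 1)
    have h₂ := neg_pi_lt_arg (z - 1)
    have h₃ : arg (z + 1) < 0 := arg_neg_iff.2 (by simpa using him)
    have h₄ : arg (z - 1) < 0 := arg_neg_iff.2 (by simpa using him)
    constructor <;> linarith
  · by_cases hre : -1 ≤ z.re
    · have hre' := hz him hre
      rw [arg_eq_zero_iff.2 ⟨by simp; linarith, by simpa using him⟩,
        arg_eq_zero_iff.2 ⟨by simp; linarith, by simpa using him⟩]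
      constructor <;> linarith [Real.pi_pos]
    · rw [arg_eq_pi_iff.2 ⟨by simp; linarith, by simpa using him⟩,
        arg_eq_pi_iff.2 ⟨by simp; linarith, by simpa using him⟩]
      constructor <;> linarith [Real.pi_pos]
  · have h₁ : 0 ≤ arg (z + 1) := arg_nonneg_iff.2 (by simpa using him.le)
    have h₂ : 0 ≤ arg (z - 1) := arg_nonneg_iff.2 (by simpa using him.le)
    have h₃ : arg (z + 1) < Real.pi := arg_lt_pi_iff.2 (Or.inr (by simpa using him.ne'))
    have h₄ : arg (z - 1) < Real.pi := arg_lt_pi_iff.2 (Or.inr (by simpa using him.ne'))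
    constructor <;> linarith

lemma re_cpow_half_mul_conj_cpow_half_pos {a b : ℂ} (ha : a ≠ 0) (hb : b ≠ 0)
    (hab : |arg a - arg b| < Real.pi) :
    0 < (a ^ (1 / 2 : ℂ) * conj (b ^ (1 / 2 : ℂ))).re := by
  rw [cpow_def_of_ne_zero ha, cpow_def_of_ne_zero hb, ← exp_conj, ← exp_add, exp_re]
  refine mul_pos (Real.exp_pos _) (Real.cos_pos_of_mem_Ioo ?_)
  simp only [add_im, mul_im, conj_im, log_im, log_re]
  norm_num
  rw [abs_sub_lt_iff] at hab
  constructor <;> linarith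

lemma norm_sub_mul_lt_one {z u v : ℂ} (hu : u ^ 2 = z + 1) (hv : v ^ 2 = z - 1)
    (huv : 0 < (u * conj v).re) : ‖z - u * v‖ < 1 := by
  have hprod : (u - v) * (u + v) = 2 := by linear_combination hu - hv
  have hsum : u + v ≠ 0 := right_ne_zero_of_mul (by rw [hprod]; norm_num)
  have hw : z - u * v = (u - v) / (u + v) := by
    rw [eq_div_iff hsum]
    linear_combination (-(u + v) / 2) * (hu + hv) + ((u - v) / 2) * (hu - hv)
  have hlt : ‖u - v‖ ^ 2 < ‖u + v‖ ^ 2 := by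
    rw [Complex.sq_norm, Complex.sq_norm, normSq_add, normSq_sub]
    linarith
  rw [hw, norm_div, div_lt_one (norm_pos_iff.2 hsum)]
  exact lt_of_pow_lt_pow_left₀ 2 (norm_nonneg _) hlt

theorem P_closed_form_and_limit
    (z : ℂ) (hz : z ∉ {w : ℂ | w.im = 0 ∧ w.re ∈ Set.Icc (-1:ℝ) 1})
    (P : ℕ → ℂ)
    (hP : ∀ m : ℕ, P m = (1 / (2 * Real.pi)) *
      ∫ φ in (0:ℝ)..(2 * Real.pi), (Real.cos (m * φ) : ℂ) / (z - (Real.cos φ : ℂ))) :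
    (∀ m : ℕ, P m =
      (z - (z + 1) ^ ((1:ℂ)/2) * (z - 1) ^ ((1:ℂ)/2)) ^ m /
        ((z + 1) ^ ((1:ℂ)/2) * (z - 1) ^ ((1:ℂ)/2))) ∧
    Tendsto P atTop (nhds 0) := by
  set u := (z + 1) ^ ((1:ℂ)/2)
  set v := (z - 1) ^ ((1:ℂ)/2)
  have hu : u ^ 2 = z + 1 := by simp only [u, one_div, cpow_ofNat_inv_pow]
  have hv : v ^ 2 = z - 1 := by simp only [v, one_div, cpow_ofNat_inv_pow]
  have hz₁ : z + 1 ≠ 0 := fun h => hz (by rw [eq_neg_of_add_eq_zero_left h]; norm_num)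
  have hz₂ : z - 1 ≠ 0 := fun h => hz (by rw [sub_eq_zero.1 h]; norm_num)
  have hw : ‖z - u * v‖ < 1 := norm_sub_mul_lt_one hu hv
    (re_cpow_half_mul_conj_cpow_half_pos hz₁ hz₂ (abs_arg_add_one_sub_arg_sub_one_lt_pi hz))
  have hprod : (z - u * v) * (z + u * v) = 1 := by
    linear_combination (-v ^ 2) * hu - (z + 1) * hv
  have hs : u * v ≠ 0 := fun h => mul_ne_zero hz₁ hz₂ <| by
    linear_combination (u * v) * h - v ^ 2 * hu - (z + 1) * hv
  have hform : ∀ m : ℕ, P m = (z - u * v) ^ m / (u * v) := fun m => by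
    have hI := integral_cos_mul_div_joukowski_sub_cos (left_ne_zero_of_mul_eq_one hprod) hw m
    rw [inv_eq_of_mul_eq_one_right hprod, show (z - u * v + (z + u * v)) / 2 = z by ring] at hI
    rw [hP, hI]
    field_simp
    ring
  refine ⟨hform, ?_⟩
  have hlim := (tendsto_pow_atTop_nhds_zero_of_norm_lt_one hw).div_const (u * v)
  rw [zero_div] at hlim
  exact hlim.congr fun m => (hform m).symm
end

section
/- With γ_m satisfying 2νh_mγ_m - γ_{m+1} - γ_{m-1} = 0 (γ_0 = 1, γ_1(ν) = (1-ϖ)ν, h_m = 1-ϖβ_m, β_m = 0 for m > L) and P_m satisfying 2zP_m - P_{m+1} - P_{m-1} = 2δ_{m0}, the Christoffel–Darboux-type identity Λ(z) = P_{m_B}(z)γ_{m_B+1}(z) - P_{m_B+1}(z)γ_{m_B}(z) holds for every integer m_B ≥ L, where Λ(z) = 1 - ϖz[P_0(z) + 2Σ_{m=1}^{L} β_m γ_m(z) P_m(z)]. -/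
/-!
Both sequences satisfy three-term recurrences `γ (m+1) + γ (m-1) = a m * γ m` and
`P (m+1) + P (m-1) = b m * P m` for `m ≥ 1`, so their Casoratian
`W m = P m * γ (m+1) - P (m+1) * γ m` telescopes: `W (m+1) - W m = (a - b) (m+1) * γ (m+1) * P (m+1)`.
Here `a m - b m = -2 ϖ z β m`, which vanishes beyond `L`, so `W m` is constant for `m ≥ L`, and the
initial values give `W 0 = 1 - ϖ z P 0`.
-/

section Casoratian

variable {R : Type*} [CommRing R]

theorem casoratian_succ_sub_casoratian (a b γ P : ℕ → R) (m : ℕ)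
    (hγ : a (m + 1) * γ (m + 1) - γ (m + 2) - γ m = 0)
    (hP : b (m + 1) * P (m + 1) - P (m + 2) - P m = 0) :
    (P (m + 1) * γ (m + 2) - P (m + 2) * γ (m + 1)) - (P m * γ (m + 1) - P (m + 1) * γ m)
      = (a (m + 1) - b (m + 1)) * γ (m + 1) * P (m + 1) := by
  linear_combination γ (m + 1) * hP - P (m + 1) * hγ

theorem casoratian_eq_add_sum (a b γ P : ℕ → R)
    (hγ : ∀ m : ℕ, 1 ≤ m → a m * γ m - γ (m + 1) - γ (m - 1) = 0)
    (hP : ∀ m : ℕ, 1 ≤ m → b m * P m - P (m + 1) - P (m - 1) = 0) (m : ℕ) :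
    P m * γ (m + 1) - P (m + 1) * γ m
      = P 0 * γ 1 - P 1 * γ 0 + ∑ k ∈ Finset.Icc 1 m, (a k - b k) * γ k * P k := by
  induction m with
  | zero => simp
  | succ n ih =>
    rw [Finset.sum_Icc_succ_top (Nat.le_add_left 1 n), ← add_assoc, ← ih]
    exact eq_add_of_sub_eq' <|
      casoratian_succ_sub_casoratian a b γ P n (hγ (n + 1) n.succ_pos) (hP (n + 1) n.succ_pos)

end Casoratian

theorem christoffel_darboux_Lambda_general
    (ϖ : ℝ) (L : ℕ)
    (β : ℕ → ℝ) (hβL : ∀ m : ℕ, L < m → β m = 0)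
    (h : ℕ → ℝ) (hh : ∀ m, h m = 1 - ϖ * β m)
    (z : ℂ) (γ P : ℕ → ℂ)
    (hγ0 : γ 0 = 1) (hγ1 : γ 1 = (1 - ϖ : ℂ) * z)
    (hγrec : ∀ m : ℕ, 1 ≤ m → 2 * z * (h m : ℂ) * γ m - γ (m + 1) - γ (m - 1) = 0)
    (hPrec : ∀ m : ℕ, 1 ≤ m → 2 * z * P m - P (m + 1) - P (m - 1) = 0)
    (hP1 : P 1 = z * P 0 - 1)
    (Λ : ℂ)
    (hΛ : Λ = 1 - (ϖ : ℂ) * z *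
      (P 0 + 2 * ∑ m ∈ Finset.Icc 1 L, (β m : ℂ) * γ m * P m)) :
    ∀ mB : ℕ, L ≤ mB → Λ = P mB * γ (mB + 1) - P (mB + 1) * γ mB := by
  intro mB hL
  have hsum : ∑ k ∈ Finset.Icc 1 mB, (2 * z * (h k : ℂ) - 2 * z) * γ k * P k
      = -(2 * ϖ * z) * ∑ k ∈ Finset.Icc 1 L, (β k : ℂ) * γ k * P k := by
    rw [Finset.mul_sum, ← Finset.sum_subset (Finset.Icc_subset_Icc_right hL)]
    · refine Finset.sum_congr rfl fun k _ => ?_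
      rw [hh]
      push_cast
      ring
    · intro k hk hkL
      have hLk : L < k := by
        simp only [Finset.mem_Icc] at hk hkL
        omega
      simp [hh, hβL k hLk]
  rw [hΛ, casoratian_eq_add_sum (fun m => 2 * z * (h m : ℂ)) (fun _ => 2 * z) γ P hγrec hPrec,
    hsum, hγ0, hγ1, hP1]
  ring

theorem christoffel_darboux_Lambda
    (ϖ : ℝ) (hϖ : ϖ ∈ Set.Ioo (0:ℝ) 1) (L : ℕ)
    (β : ℕ → ℝ) (hβ0 : β 0 = 1) (hβL : ∀ m : ℕ, L < m → β m = 0)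
    (h : ℕ → ℝ) (hh : ∀ m, h m = 1 - ϖ * β m)
    (z : ℂ) (γ P : ℕ → ℂ)
    (hγ0 : γ 0 = 1) (hγ1 : γ 1 = (1 - ϖ : ℂ) * z)
    (hγrec : ∀ m : ℕ, 1 ≤ m → 2 * z * (h m : ℂ) * γ m - γ (m + 1) - γ (m - 1) = 0)
    (hPrec : ∀ m : ℕ, 1 ≤ m → 2 * z * P m - P (m + 1) - P (m - 1) = 0)
    (hP1 : P 1 = z * P 0 - 1)
    (Λ : ℂ)
    (hΛ : Λ = 1 - (ϖ : ℂ) * z *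
      (P 0 + 2 * ∑ m ∈ Finset.Icc 1 L, (β m : ℂ) * γ m * P m)) :
    ∀ mB : ℕ, L ≤ mB → Λ = P mB * γ (mB + 1) - P (mB + 1) * γ mB :=
  christoffel_darboux_Lambda_general ϖ L β hβL h hh z γ P hγ0 hγ1 hγrec hPrec hP1 Λ hΛ
end

section
/- With γ_m and p_m as above (γ the anisotropic polynomials, p the Chebyshev polynomials of the first kind), for every m_B ≥ L: γ_{m_B}(z) p_{m_B+1}(z) - γ_{m_B+1}(z) p_{m_B}(z) = ϖ z g(z, φ_z), where g(z, φ_z) = 1 + 2 Σ_{m=1}^{L} β_m γ_m(z) p_m(z). -/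
/-!
The Casoratian `W n = γ n * p (n+1) - γ (n+1) * p n` of two solutions of three-term recurrences
`a (m+1) = u m * a m - a (m-1)` and `b (m+1) = v m * b m - b (m-1)` changes at each step by
`(v m - u m) * a m * b m`. For `γ` and the Chebyshev polynomials `p` this increment is
`2 ϖ z β m γ m p m`, which vanishes beyond `L`; summing from `W 0 = ϖ z` gives the identity.
-/

open Finset

def casoratian {R : Type*} [CommRing R] (a b : ℕ → R) (n : ℕ) : R :=
  a n * b (n + 1) - a (n + 1) * b n

section ThreeTermRecurrence

variable {R : Type*} [CommRing R] {a b u v : ℕ → R}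

theorem casoratian_succ
    (ha : ∀ m : ℕ, 1 ≤ m → u m * a m - a (m + 1) - a (m - 1) = 0)
    (hb : ∀ m : ℕ, 1 ≤ m → v m * b m - b (m + 1) - b (m - 1) = 0) (n : ℕ) :
    casoratian a b (n + 1) = casoratian a b n + (v (n + 1) - u (n + 1)) * a (n + 1) * b (n + 1) := by
  have ha' := ha (n + 1) n.succ_pos
  have hb' := hb (n + 1) n.succ_pos
  rw [Nat.add_sub_cancel] at ha' hb'
  unfold casoratian
  linear_combination b (n + 1) * ha' - a (n + 1) * hb'

theorem casoratian_eq_add_sum_s13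
    (ha : ∀ m : ℕ, 1 ≤ m → u m * a m - a (m + 1) - a (m - 1) = 0)
    (hb : ∀ m : ℕ, 1 ≤ m → v m * b m - b (m + 1) - b (m - 1) = 0) (n : ℕ) :
    casoratian a b n = casoratian a b 0 + ∑ m ∈ Icc 1 n, (v m - u m) * a m * b m := by
  induction n with
  | zero => simp
  | succ n ih =>
    rw [casoratian_succ ha hb, ih, sum_Icc_succ_top (Nat.le_add_left 1 n), add_assoc]

end ThreeTermRecurrence

theorem christoffel_darboux_g_general
    (ϖ : ℝ) (L : ℕ)
    (β : ℕ → ℝ) (hβL : ∀ m : ℕ, L < m → β m = 0)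
    (h : ℕ → ℝ) (hh : ∀ m, h m = 1 - ϖ * β m)
    (z : ℂ) (γ p : ℕ → ℂ)
    (hγ0 : γ 0 = 1) (hγ1 : γ 1 = (1 - ϖ : ℂ) * z)
    (hγrec : ∀ m : ℕ, 1 ≤ m → 2 * z * (h m : ℂ) * γ m - γ (m + 1) - γ (m - 1) = 0)
    (hp0 : p 0 = 1) (hp1 : p 1 = z)
    (hprec : ∀ m : ℕ, 1 ≤ m → 2 * z * p m - p (m + 1) - p (m - 1) = 0)
    (g : ℂ)
    (hgdef : g = 1 + 2 * ∑ m ∈ Finset.Icc 1 L, (β m : ℂ) * γ m * p m) :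
    ∀ mB : ℕ, L ≤ mB →
      γ mB * p (mB + 1) - γ (mB + 1) * p mB = (ϖ : ℂ) * z * g := by
  intro mB hmB
  have hW0 : casoratian γ p 0 = ϖ * z := by
    simp only [casoratian, zero_add, hγ0, hγ1, hp0, hp1]
    ring
  have hincrement : ∀ m, (2 * z - 2 * z * (h m : ℂ)) * γ m * p m
      = 2 * ϖ * z * ((β m : ℂ) * γ m * p m) := fun m => by
    rw [hh]
    push_cast
    ring
  have htruncate : ∑ m ∈ Icc 1 mB, (β m : ℂ) * γ m * p m = ∑ m ∈ Icc 1 L, (β m : ℂ) * γ m * p m :=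
    (sum_subset (Icc_subset_Icc_right hmB) fun m hm hmL => by
      have hLm : L < m := by
        simp only [mem_Icc] at hm hmL
        omega
      rw [hβL m hLm, Complex.ofReal_zero, zero_mul, zero_mul]).symm
  calc γ mB * p (mB + 1) - γ (mB + 1) * p mB = casoratian γ p mB := rfl
    _ = ϖ * z + 2 * ϖ * z * ∑ m ∈ Icc 1 L, (β m : ℂ) * γ m * p m := by
      rw [casoratian_eq_add_sum_s13 hγrec hprec, hW0, sum_congr rfl fun m _ => hincrement m,
        ← mul_sum, htruncate]
    _ = ϖ * z * g := by rw [hgdef]; ring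

theorem christoffel_darboux_g
    (ϖ : ℝ) (hϖ : ϖ ∈ Set.Ioo (0:ℝ) 1) (L : ℕ)
    (β : ℕ → ℝ) (hβ0 : β 0 = 1) (hβL : ∀ m : ℕ, L < m → β m = 0)
    (h : ℕ → ℝ) (hh : ∀ m, h m = 1 - ϖ * β m)
    (z : ℂ) (γ p : ℕ → ℂ)
    (hγ0 : γ 0 = 1) (hγ1 : γ 1 = (1 - ϖ : ℂ) * z)
    (hγrec : ∀ m : ℕ, 1 ≤ m → 2 * z * (h m : ℂ) * γ m - γ (m + 1) - γ (m - 1) = 0)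
    (hp0 : p 0 = 1) (hp1 : p 1 = z)
    (hprec : ∀ m : ℕ, 1 ≤ m → 2 * z * p m - p (m + 1) - p (m - 1) = 0)
    (g : ℂ)
    (hgdef : g = 1 + 2 * ∑ m ∈ Finset.Icc 1 L, (β m : ℂ) * γ m * p m) :
    ∀ mB : ℕ, L ≤ mB →
      γ mB * p (mB + 1) - γ (mB + 1) * p mB = (ϖ : ℂ) * z * g :=
  christoffel_darboux_g_general ϖ L β hβL h hh z γ p hγ0 hγ1 hγrec hp0 hp1 hprec g hgdef
end

section
/- Combining the three Christoffel–Darboux identities, for every m_B ≥ L one has p_{m_B+1}(z) Λ(z) = γ_{m_B+1}(z) - ϖ z g(z,φ_z) P_{m_B+1}(z), where Λ(z) = P_{m_B}γ_{m_B+1} - P_{m_B+1}γ_{m_B}, P_{m_B}p_{m_B+1} - P_{m_B+1}p_{m_B} = 1, and γ_{m_B}p_{m_B+1} - γ_{m_B+1}p_{m_B} = ϖ z g(z,φ_z). -/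
theorem combined_christoffel_darboux
    (ϖ : ℝ) (z g Λ : ℂ) (γ p P : ℕ → ℂ) (mB : ℕ)
    (h1 : Λ = P mB * γ (mB + 1) - P (mB + 1) * γ mB)
    (h2 : P mB * p (mB + 1) - P (mB + 1) * p mB = 1)
    (h3 : γ mB * p (mB + 1) - γ (mB + 1) * p mB = (ϖ : ℂ) * z * g) :
    p (mB + 1) * Λ = γ (mB + 1) - (ϖ : ℂ) * z * g * P (mB + 1) := by
  subst h1
  linear_combination γ (mB + 1) * h2 - P (mB + 1) * h3
end

section
/- Suppose ν₁, ν₂ ∈ ℝ \ [-1,1] with ν₁ ≠ ν₂, and φ(ν_i, ·) are functions on [0,2π] satisfying (1 - cos φ/ν_i)φ(ν_i,φ) = (ϖ/2π) g(ν_i,φ) with ∫₀^{2π}φ(ν_i,φ)dφ = 1, where g(ν,φ) = 1 + 2Σ_{m=1}^L β_mγ_m(ν)cos(mφ) and γ_m(ν_i) = ∫₀^{2π}φ(ν_i,φ)cos(mφ)dφ. Then ∫₀^{2π} cos φ · φ(ν₁,φ)φ(ν₂,φ) dφ = 0. -/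
/-!
Multiplying the eigenvalue equation for `ν₁` by `f ν₂`, the one for `ν₂` by `f ν₁` and
subtracting gives `(ν₂⁻¹ - ν₁⁻¹) cos φ f₁ f₂ = (ϖ / 2π) (f₂ g₁ - f₁ g₂)` pointwise. By the moment
relations, `∫ f ν' · g ν = 1 + 2 ∑ β_m γ_m(ν) γ_m(ν')` is symmetric in `ν, ν'`, so the right-hand
side integrates to zero.
-/

open MeasureTheory

theorem intervalIntegral.integral_mul_one_add_two_mul_sum_cos {f : ℝ → ℝ} {a b : ℝ}
    (hf : IntervalIntegrable f volume a b) (s : Finset ℕ) (c : ℕ → ℝ) :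
    ∫ x in a..b, f x * (1 + 2 * ∑ m ∈ s, c m * Real.cos (m * x)) =
      (∫ x in a..b, f x) + 2 * ∑ m ∈ s, c m * ∫ x in a..b, f x * Real.cos (m * x) := by
  have hcos : ∀ m ∈ s, IntervalIntegrable (fun x => c m * (f x * Real.cos (m * x))) volume a b :=
    fun m _ => (hf.mul_continuousOn (by fun_prop : Continuous _).continuousOn).const_mul _
  have hexpand : (fun x => f x * (1 + 2 * ∑ m ∈ s, c m * Real.cos (m * x))) =
      fun x => f x + 2 * ∑ m ∈ s, c m * (f x * Real.cos (m * x)) := by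
    ext x
    simp only [mul_add, mul_one, Finset.mul_sum]
    congr 1
    exact Finset.sum_congr rfl fun m _ => by ring
  have hsum : IntervalIntegrable (fun x => ∑ m ∈ s, c m * (f x * Real.cos (m * x))) volume a b := by
    simpa only [Finset.sum_fn] using IntervalIntegrable.sum s hcos
  rw [hexpand, intervalIntegral.integral_add hf (hsum.const_mul 2),
    intervalIntegral.integral_const_mul, intervalIntegral.integral_finsetSum hcos]
  simp only [intervalIntegral.integral_const_mul]

theorem intervalIntegral.integral_mul_mul_eq_zero_of_eigen {a b k ν₁ ν₂ : ℝ}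
    {w f₁ f₂ g₁ g₂ : ℝ → ℝ} (hne : ν₁ ≠ ν₂)
    (heig₁ : ∀ x, (1 - w x / ν₁) * f₁ x = k * g₁ x)
    (heig₂ : ∀ x, (1 - w x / ν₂) * f₂ x = k * g₂ x)
    (hint₁ : IntervalIntegrable (fun x => f₂ x * g₁ x) volume a b)
    (hint₂ : IntervalIntegrable (fun x => f₁ x * g₂ x) volume a b)
    (hsymm : ∫ x in a..b, f₂ x * g₁ x = ∫ x in a..b, f₁ x * g₂ x) :
    ∫ x in a..b, w x * f₁ x * f₂ x = 0 := by
  have hpointwise : ∀ x, (ν₂⁻¹ - ν₁⁻¹) * (w x * f₁ x * f₂ x) =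
      k * (f₂ x * g₁ x - f₁ x * g₂ x) := fun x => by
    linear_combination f₂ x * heig₁ x - f₁ x * heig₂ x
  have hscaled : (ν₂⁻¹ - ν₁⁻¹) * ∫ x in a..b, w x * f₁ x * f₂ x = 0 := by
    rw [← intervalIntegral.integral_const_mul]
    simp only [hpointwise]
    rw [intervalIntegral.integral_const_mul, intervalIntegral.integral_sub hint₁ hint₂, hsymm,
      sub_self, mul_zero]
  exact (mul_eq_zero.mp hscaled).resolve_left (sub_ne_zero.mpr (inv_injective.ne hne.symm))

theorem discrete_eigenfunction_orthogonality_general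
    (ϖ : ℝ) (L : ℕ) (β : ℕ → ℝ)
    (γ : ℕ → ℝ → ℝ)
    (ν₁ ν₂ : ℝ) (hne : ν₁ ≠ ν₂)
    (f : ℝ → ℝ → ℝ)
    (g : ℝ → ℝ → ℝ)
    (hg : ∀ ν φ : ℝ, g ν φ =
      1 + 2 * ∑ m ∈ Finset.Icc 1 L, β m * γ m ν * Real.cos (m * φ))
    (heig : ∀ ν ∈ ({ν₁, ν₂} : Set ℝ), ∀ φ : ℝ,
      (1 - Real.cos φ / ν) * f ν φ = ϖ / (2 * Real.pi) * g ν φ)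
    (hnorm : ∀ ν ∈ ({ν₁, ν₂} : Set ℝ),
      ∫ φ in (0:ℝ)..(2 * Real.pi), f ν φ = 1)
    (hmom : ∀ ν ∈ ({ν₁, ν₂} : Set ℝ), ∀ m : ℕ,
      γ m ν = ∫ φ in (0:ℝ)..(2 * Real.pi), f ν φ * Real.cos (m * φ)) :
    ∫ φ in (0:ℝ)..(2 * Real.pi), Real.cos φ * f ν₁ φ * f ν₂ φ = 0 := by
  have hmem₁ : ν₁ ∈ ({ν₁, ν₂} : Set ℝ) := Or.inl rfl
  have hmem₂ : ν₂ ∈ ({ν₁, ν₂} : Set ℝ) := Or.inr rfl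
  have hint : ∀ ν ∈ ({ν₁, ν₂} : Set ℝ), IntervalIntegrable (f ν) volume 0 (2 * Real.pi) :=
    fun ν hν => intervalIntegral.intervalIntegrable_of_integral_ne_zero (by simp [hnorm ν hν])
  have hgcont : ∀ ν, Continuous (g ν) := fun ν => by rw [funext (hg ν)]; fun_prop
  have hpair : ∀ ν ∈ ({ν₁, ν₂} : Set ℝ), ∀ ν' ∈ ({ν₁, ν₂} : Set ℝ),
      ∫ φ in (0:ℝ)..(2 * Real.pi), f ν' φ * g ν φ =
        1 + 2 * ∑ m ∈ Finset.Icc 1 L, β m * γ m ν * γ m ν' := by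
    intro ν hν ν' hν'
    simp only [hg, intervalIntegral.integral_mul_one_add_two_mul_sum_cos (hint ν' hν'),
      hnorm ν' hν', ← hmom ν' hν']
  refine intervalIntegral.integral_mul_mul_eq_zero_of_eigen hne (heig ν₁ hmem₁) (heig ν₂ hmem₂)
    ((hint ν₂ hmem₂).mul_continuousOn (hgcont ν₁).continuousOn)
    ((hint ν₁ hmem₁).mul_continuousOn (hgcont ν₂).continuousOn) ?_
  rw [hpair ν₁ hmem₁ ν₂ hmem₂, hpair ν₂ hmem₂ ν₁ hmem₁]
  simp only [mul_right_comm (β _)]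

theorem discrete_eigenfunction_orthogonality
    (ϖ : ℝ) (hϖ : ϖ ∈ Set.Ioo (0:ℝ) 1) (L : ℕ) (β : ℕ → ℝ)
    (γ : ℕ → ℝ → ℝ)
    (ν₁ ν₂ : ℝ) (h1 : 1 < |ν₁|) (h2 : 1 < |ν₂|) (hne : ν₁ ≠ ν₂)
    (f : ℝ → ℝ → ℝ)
    (g : ℝ → ℝ → ℝ)
    (hg : ∀ ν φ : ℝ, g ν φ =
      1 + 2 * ∑ m ∈ Finset.Icc 1 L, β m * γ m ν * Real.cos (m * φ))
    (heig : ∀ ν ∈ ({ν₁, ν₂} : Set ℝ), ∀ φ : ℝ,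
      (1 - Real.cos φ / ν) * f ν φ = ϖ / (2 * Real.pi) * g ν φ)
    (hnorm : ∀ ν ∈ ({ν₁, ν₂} : Set ℝ),
      ∫ φ in (0:ℝ)..(2 * Real.pi), f ν φ = 1)
    (hmom : ∀ ν ∈ ({ν₁, ν₂} : Set ℝ), ∀ m : ℕ,
      γ m ν = ∫ φ in (0:ℝ)..(2 * Real.pi), f ν φ * Real.cos (m * φ)) :
    ∫ φ in (0:ℝ)..(2 * Real.pi), Real.cos φ * f ν₁ φ * f ν₂ φ = 0 :=
  discrete_eigenfunction_orthogonality_general ϖ L β γ ν₁ ν₂ hne f g hg heig hnorm hmom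
end
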